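/- Let P(x,y) = 21x¹⁸ + 480x¹⁷y + 5012x¹⁶y² + 31776x¹⁵y³ + 137460x¹⁴y⁴ + 432208x¹³y⁵ + 1026480x¹²y⁶ + 1886976x¹¹y⁷ + 2726437x¹⁰y⁸ + 3123120x⁹y⁹ + 2845128x⁸y¹⁰ + 2057120x⁷y¹¹ + 1171716x⁶y¹² + 518448x⁵y¹³ + 174160x⁴y¹⁴ + 42816x³y¹⁵ + 7245x²y¹⁶ + 752xy¹⁷ + 36y¹⁸ and Q(x,y) = 21x⁴ + 186x³y + 497x²y² + 248xy³ + 36y⁴. Then the polynomial identity P(x,y) + x¹⁰y⁸ = (x+y)¹⁴ · Q(x,y) holds in ℚ[x,y]. -/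
import Mathlib


open MvPolynomial

/-- The degree-18 polynomial `P` from the local-curve computation for
`(l₁,l₂,l₃) = (8,6,-16)`. -/
noncomputable def P_local {R : Type*} [CommRing R] (x y : R) : R :=
  21*x^18 + 480*x^17*y + 5012*x^16*y^2 + 31776*x^15*y^3 + 137460*x^14*y^4 +
  432208*x^13*y^5 + 1026480*x^12*y^6 + 1886976*x^11*y^7 + 2726437*x^10*y^8 +
  3123120*x^9*y^9 + 2845128*x^8*y^10 + 2057120*x^7*y^11 + 1171716*x^6*y^12 +
  518448*x^5*y^13 + 174160*x^4*y^14 + 42816*x^3*y^15 + 7245*x^2*y^16 +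
  752*x*y^17 + 36*y^18

/-- The degree-4 polynomial `Q` from the Gromov–Witten side. -/
noncomputable def Q_local {R : Type*} [CommRing R] (x y : R) : R :=
  21*x^4 + 186*x^3*y + 497*x^2*y^2 + 248*x*y^3 + 36*y^4

/-- The polynomial identity `P(x,y) + x¹⁰y⁸ = (x+y)¹⁴ · Q(x,y)` in `ℚ[x,y]`. -/
theorem local_curve_polynomial_identity :
    P_local (X 0 : MvPolynomial (Fin 2) ℚ) (X 1) + (X 0)^10 * (X 1)^8
      = (X 0 + X 1)^14 * Q_local (X 0) (X 1) := by
  simp only [P_local, Q_local]; ring
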